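/- arXiv:2312.12597 — 4 statements merged into one kernel-verified Lean document; each statement's English description precedes it below -/
import Mathlib

section
/- For every probability measures Z0 and Z1 on a measurable space Ω and every measurable classifier g : Ω → ℝ taking values in {0,1}, there exists a measurable adversary h : Ω → ℝ taking values in {0,1} (namely h = 1 − g if ∫ g dZ0 ≥ ∫ g dZ1, and h = g otherwise) such that L_DP(h) = Δ_DP(g). Consequently, the supremum of L_DP(h) over all measurable {0,1}-valued adversaries h is at least Δ_DP(g): the demographic parity distance of any classifier learnable from the representation is bounded above by the optimal adversarial objective value. -/
/-!
Integrating `1 - h` against a probability measure gives `1 - ∫ h`, so the adversarial objective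
`L_DP(h)` is just `∫ h dZ1 - ∫ h dZ0`. Taking `h = 1 - g` or `h = g` according to the sign of
`∫ g dZ0 - ∫ g dZ1` makes this difference equal to `Δ_DP(g)`. Every `[0, 1]`-valued adversary
has `L_DP(h) ≤ 1`, so the set of objective values is bounded above and its supremum dominates
`Δ_DP(g)`.
-/

open MeasureTheory Set

lemma mem_Icc_zero_one_of_eq_zero_or_eq_one {α : Type*} [Preorder α] [Zero α] [One α]
    [ZeroLEOneClass α] {a : α} (ha : a = 0 ∨ a = 1) : a ∈ Icc (0 : α) 1 := by
  rcases ha with rfl | rfl <;> simp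

lemma one_sub_eq_zero_or_eq_one {α : Type*} [Ring α] {a : α} (ha : a = 0 ∨ a = 1) :
    1 - a = 0 ∨ 1 - a = 1 := by
  rcases ha with rfl | rfl <;> simp

namespace MeasureTheory

variable {Ω : Type*} [MeasurableSpace Ω] {μ : Measure Ω} {h : Ω → ℝ}

lemma Integrable.of_mem_Icc_zero_one [IsFiniteMeasure μ] (hm : AEStronglyMeasurable h μ)
    (h01 : ∀ x, h x ∈ Icc 0 1) : Integrable h μ :=
  .of_bound hm 1 <| .of_forall fun x => by
    rw [Real.norm_of_nonneg (h01 x).1]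
    exact (h01 x).2

lemma integral_le_one_of_le_one [IsProbabilityMeasure μ] (h1 : ∀ x, h x ≤ 1) :
    ∫ x, h x ∂μ ≤ 1 := by
  by_cases hi : Integrable h μ
  · simpa using integral_mono hi (integrable_const 1) h1
  · simp [integral_undef hi]

lemma integral_one_sub [IsProbabilityMeasure μ] (hi : Integrable h μ) :
    ∫ x, (1 - h x) ∂μ = 1 - ∫ x, h x ∂μ := by
  simp [integral_sub (integrable_const 1) hi]

/-- The adversarial demographic-parity objective `L_DP(h)`. -/
noncomputable def dpAdversaryObjective (Z0 Z1 : Measure Ω) (h : Ω → ℝ) : ℝ :=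
  (∫ x, (1 - h x) ∂Z0) + (∫ x, h x ∂Z1) - 1

variable {Z0 Z1 : Measure Ω}

lemma dpAdversaryObjective_eq_integral_sub [IsProbabilityMeasure Z0] (hi : Integrable h Z0) :
    dpAdversaryObjective Z0 Z1 h = ∫ x, h x ∂Z1 - ∫ x, h x ∂Z0 := by
  rw [dpAdversaryObjective, integral_one_sub hi]
  ring

lemma dpAdversaryObjective_one_sub [IsProbabilityMeasure Z1] (hi : Integrable h Z1) :
    dpAdversaryObjective Z0 Z1 (fun x => 1 - h x) = ∫ x, h x ∂Z0 - ∫ x, h x ∂Z1 := by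
  simp only [dpAdversaryObjective, sub_sub_cancel, integral_one_sub hi]
  ring

lemma dpAdversaryObjective_le_one [IsProbabilityMeasure Z0] [IsProbabilityMeasure Z1]
    (hm : Measurable h) (h01 : ∀ x, h x ∈ Icc 0 1) : dpAdversaryObjective Z0 Z1 h ≤ 1 := by
  rw [dpAdversaryObjective_eq_integral_sub (.of_mem_Icc_zero_one hm.aestronglyMeasurable h01)]
  have h0 : 0 ≤ ∫ x, h x ∂Z0 := integral_nonneg fun x => (h01 x).1
  have h1 : ∫ x, h x ∂Z1 ≤ 1 := integral_le_one_of_le_one fun x => (h01 x).2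
  linarith

end MeasureTheory

/-- LAFTR demographic-parity bound: for any binary classifier `g`, the adversary
`h = 1 - g` (if `∫ g dZ0 ≥ ∫ g dZ1`, else `h = g`) achieves `L_DP(h) = Δ_DP(g)`,
hence `Δ_DP(g)` is bounded above by the optimal adversarial objective value. -/
theorem laftr_demographic_parity_bound
    {Ω : Type*} [MeasurableSpace Ω]
    (Z0 Z1 : Measure Ω) [IsProbabilityMeasure Z0] [IsProbabilityMeasure Z1]
    (g : Ω → ℝ) (hg : Measurable g) (hg01 : ∀ x, g x = 0 ∨ g x = 1) :
    (∃ h : Ω → ℝ, Measurable h ∧ (∀ x, h x = 0 ∨ h x = 1) ∧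
      ((∫ x, g x ∂Z1 ≤ ∫ x, g x ∂Z0) → h = fun x => 1 - g x) ∧
      (¬ (∫ x, g x ∂Z1 ≤ ∫ x, g x ∂Z0) → h = g) ∧
      (∫ x, (1 - h x) ∂Z0) + (∫ x, h x ∂Z1) - 1
        = |(∫ x, g x ∂Z0) - ∫ x, g x ∂Z1|) ∧
    |(∫ x, g x ∂Z0) - ∫ x, g x ∂Z1| ≤
      sSup {L : ℝ | ∃ h : Ω → ℝ, Measurable h ∧ (∀ x, h x = 0 ∨ h x = 1) ∧
        L = (∫ x, (1 - h x) ∂Z0) + (∫ x, h x ∂Z1) - 1} := by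
  have hgi {μ : Measure Ω} [IsProbabilityMeasure μ] : Integrable g μ :=
    .of_mem_Icc_zero_one hg.aestronglyMeasurable fun x =>
      mem_Icc_zero_one_of_eq_zero_or_eq_one (hg01 x)
  obtain ⟨h, hm, h01, hcase⟩ :
      ∃ h : Ω → ℝ, Measurable h ∧ (∀ x, h x = 0 ∨ h x = 1) ∧
      ((∫ x, g x ∂Z1 ≤ ∫ x, g x ∂Z0) → h = fun x => 1 - g x) ∧
      (¬ (∫ x, g x ∂Z1 ≤ ∫ x, g x ∂Z0) → h = g) ∧
      dpAdversaryObjective Z0 Z1 h = |(∫ x, g x ∂Z0) - ∫ x, g x ∂Z1| := by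
    by_cases hle : ∫ x, g x ∂Z1 ≤ ∫ x, g x ∂Z0
    · refine ⟨fun x => 1 - g x, measurable_const.sub hg,
        fun x => one_sub_eq_zero_or_eq_one (hg01 x), fun _ => rfl, absurd hle, ?_⟩
      rw [abs_of_nonneg (sub_nonneg.2 hle), dpAdversaryObjective_one_sub hgi]
    · refine ⟨g, hg, hg01, fun h => absurd h hle, fun _ => rfl, ?_⟩
      rw [abs_of_neg (by linarith), dpAdversaryObjective_eq_integral_sub hgi, neg_sub]
  refine ⟨⟨h, hm, h01, hcase⟩, le_csSup ⟨1, ?_⟩ ⟨h, hm, h01, hcase.2.2.symm⟩⟩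
  rintro _ ⟨h', hm', h01', rfl⟩
  exact dpAdversaryObjective_le_one hm' fun x => mem_Icc_zero_one_of_eq_zero_or_eq_one (h01' x)
end

section
/- Let N be a positive integer, let y : Fin N → {0,1} be binary labels, and let q : Fin N → [0,1] be soft environment assignments with Σ_i q_i > 0 and Σ_i (1 − q_i) > 0. Define the per-bin invariance violation Δ(q) = | (Σ_i q_i y_i)/(Σ_i q_i) − (Σ_i (1 − q_i) y_i)/(Σ_i (1 − q_i)) |. Then Δ(q) ≤ 1 for all such q; moreover, if both labels occur (there exist i, i' with y_i = 1 and y_{i'} = 0), then the hard assignment q_i = y_i satisfies the positivity conditions and attains Δ(q) = 1. Hence assigning all examples with y = 1 to one environment and all examples with y = 0 to the other achieves the maximum possible value of the per-bin violation of the environment invariance constraint. -/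
/-!
A weighted mean of labels in `[0, 1]` lies in `[0, 1]`, so two such means differ by at most `1`.
For the hard split `q = y` the labels are idempotent (`y * y = y`, `(1 - y) * y = 0`), so the two
environment means are exactly `1` and `0`.
-/

open Finset

lemma weighted_mean_mem_Icc {ι : Type*} (s : Finset ι) {w f : ι → ℝ} {a b : ℝ}
    (hw : ∀ i ∈ s, 0 ≤ w i) (hs : 0 < ∑ i ∈ s, w i) (hf : ∀ i ∈ s, f i ∈ Set.Icc a b) :
    (∑ i ∈ s, w i * f i) / ∑ i ∈ s, w i ∈ Set.Icc a b := by
  rw [Set.mem_Icc, le_div_iff₀ hs, div_le_iff₀ hs, mul_sum, mul_sum]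
  constructor <;> refine sum_le_sum fun i hi => ?_
  · nlinarith [hw i hi, (hf i hi).1]
  · nlinarith [hw i hi, (hf i hi).2]

lemma abs_sub_weighted_means_le_one {ι : Type*} (s : Finset ι) {v w f : ι → ℝ}
    (hv : ∀ i ∈ s, 0 ≤ v i) (hvs : 0 < ∑ i ∈ s, v i)
    (hw : ∀ i ∈ s, 0 ≤ w i) (hws : 0 < ∑ i ∈ s, w i) (hf : ∀ i ∈ s, f i ∈ Set.Icc (0 : ℝ) 1) :
    |(∑ i ∈ s, v i * f i) / ∑ i ∈ s, v i - (∑ i ∈ s, w i * f i) / ∑ i ∈ s, w i| ≤ 1 := by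
  rw [← Real.dist_eq]
  exact Real.dist_le_of_mem_Icc_01 (weighted_mean_mem_Icc s hv hvs hf)
    (weighted_mean_mem_Icc s hw hws hf)

theorem binned_invariance_violation_maximized_by_label_split_general
    (N : ℕ) (y : Fin N → ℝ) (hy : ∀ i, y i = 0 ∨ y i = 1) :
    (∀ q : Fin N → ℝ, (∀ i, 0 ≤ q i ∧ q i ≤ 1) →
      0 < ∑ i, q i → 0 < ∑ i, (1 - q i) →
      |(∑ i, q i * y i) / (∑ i, q i) -
        (∑ i, (1 - q i) * y i) / (∑ i, (1 - q i))| ≤ 1) ∧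
    ((∃ i, y i = 1) → (∃ i, y i = 0) →
      (∀ i, 0 ≤ y i ∧ y i ≤ 1) ∧
      0 < ∑ i, y i ∧ 0 < ∑ i, (1 - y i) ∧
      |(∑ i, y i * y i) / (∑ i, y i) -
        (∑ i, (1 - y i) * y i) / (∑ i, (1 - y i))| = 1) := by
  have hy_mem (i : Fin N) : y i ∈ Set.Icc (0 : ℝ) 1 := by
    rcases hy i with h | h <;> simp [h]
  have hy_idem (i : Fin N) : IsIdempotentElem (y i) := IsIdempotentElem.iff_eq_zero_or_one.2 (hy i)
  refine ⟨fun q hq hq_pos hq_pos' => ?_, fun ⟨i₁, hi₁⟩ ⟨i₀, hi₀⟩ => ?_⟩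
  · exact abs_sub_weighted_means_le_one univ (fun i _ => (hq i).1) hq_pos
      (fun i _ => sub_nonneg.2 (hq i).2) hq_pos' (fun i _ => hy_mem i)
  · have hpos : 0 < ∑ i, y i :=
      sum_pos' (fun i _ => (hy_mem i).1) ⟨i₁, mem_univ _, by simp [hi₁]⟩
    have hpos' : 0 < ∑ i, (1 - y i) :=
      sum_pos' (fun i _ => sub_nonneg.2 (hy_mem i).2) ⟨i₀, mem_univ _, by simp [hi₀]⟩
    refine ⟨hy_mem, hpos, hpos', ?_⟩
    simp only [fun i => (hy_idem i).eq, fun i => (hy_idem i).one_sub_mul_self, sum_const_zero,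
      zero_div, div_self hpos.ne', sub_zero, abs_one]

/-- Binned environment invariance: within a bin, the violation
`Δ(q) = |(Σ qᵢyᵢ)/(Σ qᵢ) − (Σ (1−qᵢ)yᵢ)/(Σ (1−qᵢ))|` of the environment invariance
constraint is at most `1` for every soft assignment `q`, and if both labels occur then
the hard assignment `q = y` (all `y = 1` examples to environment 1, all `y = 0`
examples to environment 2) satisfies the positivity conditions and attains `Δ = 1`. -/
theorem binned_invariance_violation_maximized_by_label_split
    (N : ℕ) (hN : 0 < N) (y : Fin N → ℝ) (hy : ∀ i, y i = 0 ∨ y i = 1) :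
    (∀ q : Fin N → ℝ, (∀ i, 0 ≤ q i ∧ q i ≤ 1) →
      0 < ∑ i, q i → 0 < ∑ i, (1 - q i) →
      |(∑ i, q i * y i) / (∑ i, q i) -
        (∑ i, (1 - q i) * y i) / (∑ i, (1 - q i))| ≤ 1) ∧
    ((∃ i, y i = 1) → (∃ i, y i = 0) →
      (∀ i, 0 ≤ y i ∧ y i ≤ 1) ∧
      0 < ∑ i, y i ∧ 0 < ∑ i, (1 - y i) ∧
      |(∑ i, y i * y i) / (∑ i, y i) -
        (∑ i, (1 - y i) * y i) / (∑ i, (1 - y i))| = 1) :=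
  binned_invariance_violation_maximized_by_label_split_general N y hy
end

section
/- Let d and n be positive integers, let q be a probability mass function on Fin d, and let X_1, …, X_n be i.i.d. random variables on a probability space, each distributed according to q. Let q̂ be the random empirical distribution, q̂(j) = (1/n)·|{i ≤ n : X_i = j}|. Then for every ε > 0, P( ‖q̂ − q‖₂ ≥ 1/√n + ε ) ≤ exp(−n ε²), and consequently P( ‖q̂ − q‖₁ ≥ √d · (1/√n + ε) ) ≤ exp(−n ε²). -/
/-!
Under the product weights `∏ i, q (x i)` on samples `x : Fin n → Fin d`, the statistic
`f x = ‖q̂ - q‖₂` changes by at most `√2 / n` when one sample is changed. McDiarmid's inequality,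
obtained by tensorizing Hoeffding's lemma one coordinate at a time, then bounds the weight of
`{f ≥ E f + ε}` by `exp (-n ε²)`. By Jensen, `E f ≤ √(E f²) = √(∑ j, q j (1 - q j) / n) ≤ 1 / √n`.
The `ℓ¹` bound follows from `‖v‖₁ ≤ √d ‖v‖₂`.
-/

open Real MeasureTheory ProbabilityTheory Finset

theorem sum_mul_exp_le_exp_add_of_sub_le {α : Type*} [Fintype α] {q : α → ℝ}
    (hq0 : ∀ a, 0 ≤ q a) (hq1 : ∑ a, q a = 1) {g : α → ℝ} {c : ℝ} (hg : ∀ a b, g a - g b ≤ c) :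
    ∑ a, q a * exp (g a) ≤ exp (∑ a, q a * g a + c ^ 2 / 8) := by
  let _ : MeasurableSpace α := ⊤
  have : MeasurableSingletonClass α := ⟨fun _ => trivial⟩
  let p : PMF α := PMF.ofFintype (fun a => ENNReal.ofReal (q a)) (by
    rw [← ENNReal.ofReal_sum_of_nonneg fun a _ => hq0 a, hq1, ENNReal.ofReal_one])
  have hp (f : α → ℝ) : ∫ a, f a ∂p.toMeasure = ∑ a, q a * f a := by
    simp [p, PMF.integral_eq_sum, ENNReal.toReal_ofReal (hq0 _)]
  have : Nonempty α := by
    by_contra h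
    simp [not_nonempty_iff.mp h] at hq1
  obtain ⟨a₀, ha₀⟩ := Finite.exists_min g
  have hoeffding := (hasSubgaussianMGF_of_mem_Icc (μ := p.toMeasure) (a := g a₀) (b := g a₀ + c)
    (measurable_of_countable g).aemeasurable
    (ae_of_all _ fun a => ⟨ha₀ a, by linarith [hg a a₀]⟩)).mgf_le 1
  have hc : 0 ≤ c := by simpa using hg a₀ a₀
  rw [mgf, hp, hp] at hoeffding
  simp only [add_sub_cancel_left, one_mul, one_pow, mul_one, NNReal.coe_pow, NNReal.coe_div,
    NNReal.coe_ofNat, coe_nnnorm, norm_eq_abs, abs_of_nonneg hc] at hoeffding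
  calc ∑ a, q a * exp (g a) = exp (∑ a, q a * g a) * ∑ a, q a * exp (g a - ∑ a, q a * g a) := by
        rw [mul_sum]; congr! 1 with a; rw [exp_sub]; field_simp
    _ ≤ exp (∑ a, q a * g a) * exp ((c / 2) ^ 2 / 2) := by gcongr
    _ = exp (∑ a, q a * g a + c ^ 2 / 8) := by rw [← exp_add]; ring_nf

theorem sum_filter_le_exp_mul_sum {ι : Type*} [Fintype ι] {w f : ι → ℝ} (hw : ∀ x, 0 ≤ w x)
    {t : ℝ} (ht : 0 ≤ t) (r : ℝ) :
    ∑ x with r ≤ f x, w x ≤ exp (-(t * r)) * ∑ x, w x * exp (t * f x) := by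
  calc ∑ x with r ≤ f x, w x ≤ ∑ x with r ≤ f x, w x * exp (t * (f x - r)) := by
        refine sum_le_sum fun x hx => le_mul_of_one_le_right (hw x) (one_le_exp ?_)
        exact mul_nonneg ht (sub_nonneg.2 (mem_filter.1 hx).2)
    _ ≤ ∑ x, w x * exp (t * (f x - r)) :=
        sum_le_sum_of_subset_of_nonneg (filter_subset _ _) fun x _ _ =>
          mul_nonneg (hw x) (exp_pos _).le
    _ = exp (-(t * r)) * ∑ x, w x * exp (t * f x) := by
        rw [mul_sum]
        refine sum_congr rfl fun x _ => ?_
        rw [mul_sub, sub_eq_add_neg, exp_add]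
        ring

section ProductWeight
variable {α : Type*} [Fintype α] {q : α → ℝ} {m : ℕ}

theorem sum_prod_mul_prod (φ : Fin m → α → ℝ) :
    ∑ x : Fin m → α, (∏ i, q (x i)) * ∏ i, φ i (x i) = ∏ i, ∑ a, q a * φ i a := by
  simp_rw [← prod_mul_distrib]
  exact (Fintype.prod_sum fun i a => q a * φ i a).symm

theorem sum_prod_eq_one (hq1 : ∑ a, q a = 1) : ∑ x : Fin m → α, ∏ i, q (x i) = 1 := by
  simpa [hq1] using sum_prod_mul_prod (q := q) fun _ _ => (1 : ℝ)

theorem sum_prod_mul_apply (hq1 : ∑ a, q a = 1) (i : Fin m) (h : α → ℝ) :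
    ∑ x : Fin m → α, (∏ k, q (x k)) * h (x i) = ∑ a, q a * h a := by
  set φ : Fin m → α → ℝ := Function.update (fun _ _ => 1) i h
  have hφi : φ i = h := Function.update_self ..
  have hφ (x : Fin m → α) : ∏ k, φ k (x k) = h (x i) := by
    rw [prod_eq_single i (fun k _ hk => by simp [φ, Function.update_of_ne hk]) (by simp), hφi]
  have hφ_sum : ∏ k, ∑ a, q a * φ k a = ∑ a, q a * h a := by
    rw [prod_eq_single i (fun k _ hk => by simp [φ, Function.update_of_ne hk, hq1]) (by simp),
      hφi]
  simpa only [hφ, hφ_sum] using sum_prod_mul_prod (q := q) φ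

theorem sum_prod_mul_apply_mul_apply (hq1 : ∑ a, q a = 1) {i k : Fin m} (hik : i ≠ k)
    (g h : α → ℝ) :
    ∑ x : Fin m → α, (∏ l, q (x l)) * (g (x i) * h (x k)) =
      (∑ a, q a * g a) * ∑ a, q a * h a := by
  set φ : Fin m → α → ℝ := Function.update (Function.update (fun _ _ => 1) i g) k h
  have hφi : φ i = g := by simp [φ, Function.update_of_ne hik]
  have hφk : φ k = h := Function.update_self ..
  have hφ_one {l : Fin m} (hl : l ≠ i ∧ l ≠ k) : φ l = fun _ => 1 := by
    simp [φ, Function.update_of_ne hl.1, Function.update_of_ne hl.2]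
  have hφ (x : Fin m → α) : ∏ l, φ l (x l) = g (x i) * h (x k) := by
    rw [prod_eq_mul i k hik (fun l _ hl => by simp [hφ_one hl]) (by simp) (by simp), hφi, hφk]
  have hφ_sum : ∏ l, ∑ a, q a * φ l a = (∑ a, q a * g a) * ∑ a, q a * h a := by
    rw [prod_eq_mul i k hik (fun l _ hl => by simp [hφ_one hl, hq1]) (by simp) (by simp), hφi,
      hφk]
  simpa only [hφ, hφ_sum] using sum_prod_mul_prod (q := q) φ

theorem sum_prod_mul_sum_sq (hq1 : ∑ a, q a = 1) {h : α → ℝ} (hh : ∑ a, q a * h a = 0) :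
    ∑ x : Fin m → α, (∏ i, q (x i)) * (∑ i, h (x i)) ^ 2 = m * ∑ a, q a * h a ^ 2 := by
  have hpair (i k : Fin m) : ∑ x : Fin m → α, (∏ l, q (x l)) * (h (x i) * h (x k)) =
      if i = k then ∑ a, q a * h a ^ 2 else 0 := by
    split_ifs with hik
    · subst hik
      simp_rw [← sq]
      exact sum_prod_mul_apply hq1 i fun a => h a ^ 2
    · simp [sum_prod_mul_apply_mul_apply hq1 hik, hh]
  calc ∑ x : Fin m → α, (∏ i, q (x i)) * (∑ i, h (x i)) ^ 2
      = ∑ i, ∑ k, ∑ x : Fin m → α, (∏ l, q (x l)) * (h (x i) * h (x k)) := by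
        simp_rw [sq, sum_mul_sum, mul_sum]
        rw [sum_comm]
        exact sum_congr rfl fun i _ => sum_comm
    _ = m * ∑ a, q a * h a ^ 2 := by simp [hpair]

theorem sum_pi_succ_eq_sum_sum_cons {β : Type*} [AddCommMonoid β] (F : (Fin (m + 1) → α) → β) :
    ∑ x, F x = ∑ a, ∑ y : Fin m → α, F (Fin.cons a y) := by
  rw [← Fintype.sum_prod_type']
  exact (Fintype.sum_equiv (Fin.consEquiv fun _ => α) _ _ fun _ => rfl).symm

theorem sum_prod_mul_exp_le_of_sub_le (hq0 : ∀ a, 0 ≤ q a) (hq1 : ∑ a, q a = 1) {c : ℝ}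
    {f : (Fin m → α) → ℝ} (hf : ∀ x i a, f x - f (Function.update x i a) ≤ c) :
    ∑ x, (∏ i, q (x i)) * exp (f x) ≤ exp (∑ x, (∏ i, q (x i)) * f x + m * c ^ 2 / 8) := by
  induction m with
  | zero => simp
  | succ m ih =>
    have hW (a : α) (y : Fin m → α) :
        ∏ i, q ((Fin.cons a y : Fin (m + 1) → α) i) = q a * ∏ i, q (y i) := by
      simp [Fin.prod_univ_succ]
    set g : α → ℝ := fun a => ∑ y, (∏ i, q (y i)) * f (Fin.cons a y)
    have hslice (a : α) :
        ∑ y, (∏ i, q (y i)) * exp (f (Fin.cons a y)) ≤ exp (g a + m * c ^ 2 / 8) :=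
      ih fun y i b => by simpa [Fin.cons_update] using hf (Fin.cons a y) i.succ b
    have hg (a b : α) : g a - g b ≤ c := by
      calc g a - g b = ∑ y, (∏ i, q (y i)) * (f (Fin.cons a y) - f (Fin.cons b y)) := by
            simp only [g, mul_sub, sum_sub_distrib]
        _ ≤ ∑ y : Fin m → α, (∏ i, q (y i)) * c := by
            gcongr with y
            · exact prod_nonneg fun i _ => hq0 _
            · simpa using hf (Fin.cons a y) 0 b
        _ = c := by rw [← sum_mul, sum_prod_eq_one hq1, one_mul]
    calc ∑ x, (∏ i, q (x i)) * exp (f x)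
        = ∑ a, q a * ∑ y, (∏ i, q (y i)) * exp (f (Fin.cons a y)) := by
          simp only [sum_pi_succ_eq_sum_sum_cons, hW, mul_sum, mul_assoc]
      _ ≤ ∑ a, q a * exp (g a + m * c ^ 2 / 8) := by
          gcongr with a
          · exact hq0 a
          · exact hslice a
      _ = (∑ a, q a * exp (g a)) * exp (m * c ^ 2 / 8) := by
          simp only [exp_add, sum_mul, mul_assoc]
      _ ≤ exp (∑ a, q a * g a + c ^ 2 / 8) * exp (m * c ^ 2 / 8) := by
          gcongr
          exact sum_mul_exp_le_exp_add_of_sub_le hq0 hq1 hg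
      _ = exp (∑ x, (∏ i, q (x i)) * f x + (m + 1 : ℕ) * c ^ 2 / 8) := by
          rw [← exp_add, sum_pi_succ_eq_sum_sum_cons]
          simp only [g, hW, mul_sum, mul_assoc]
          push_cast
          ring_nf

theorem sum_prod_filter_le_exp_of_sub_le (hq0 : ∀ a, 0 ≤ q a) (hq1 : ∑ a, q a = 1) {c : ℝ}
    {f : (Fin m → α) → ℝ} (hf : ∀ x i a, f x - f (Function.update x i a) ≤ c) {s r : ℝ}
    (hs : 0 ≤ s) (hr : ∑ x, (∏ i, q (x i)) * f x + s ≤ r) :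
    ∑ x with r ≤ f x, ∏ i, q (x i) ≤ exp (-2 * s ^ 2 / (m * c ^ 2)) := by
  -- the Chernoff parameter minimizing `-t s + m t² c² / 8`
  set t := 4 * s / (m * c ^ 2)
  have ht : 0 ≤ t := by positivity
  have hmgf := sum_prod_mul_exp_le_of_sub_le hq0 hq1 (f := fun x => t * f x) (c := t * c)
    fun x i a => by rw [← mul_sub]; exact mul_le_mul_of_nonneg_left (hf x i a) ht
  calc ∑ x with r ≤ f x, ∏ i, q (x i)
      ≤ exp (-(t * r)) * ∑ x, (∏ i, q (x i)) * exp (t * f x) :=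
        sum_filter_le_exp_mul_sum (fun x => prod_nonneg fun i _ => hq0 _) ht r
    _ ≤ exp (-(t * r)) * exp (t * ∑ x, (∏ i, q (x i)) * f x + m * (t * c) ^ 2 / 8) := by
        gcongr
        simpa only [mul_sum, mul_left_comm t] using hmgf
    _ ≤ exp (-(t * s) + m * (t * c) ^ 2 / 8) := by
        rw [← exp_add, exp_le_exp]
        linarith [mul_le_mul_of_nonneg_left hr ht]
    _ = exp (-2 * s ^ 2 / (m * c ^ 2)) := by
        congr 1
        -- if `m c² = 0`, then `t = 0` and both exponents vanish since `x / 0 = 0`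
        rcases eq_or_ne ((m : ℝ) * c ^ 2) 0 with h | h
        · simp [t, h]
        · simp only [t]
          field_simp
          ring

end ProductWeight

theorem sqrt_sum_sq_sub_sqrt_sum_sq_le {ι : Type*} [Fintype ι] (u v : ι → ℝ) :
    √(∑ j, u j ^ 2) - √(∑ j, v j ^ 2) ≤ √(∑ j, (u j - v j) ^ 2) := by
  have hnorm (w : ι → ℝ) : ‖WithLp.toLp 2 w‖ = √(∑ j, w j ^ 2) := by
    simp [EuclideanSpace.norm_eq]
  simpa only [hnorm, ← WithLp.toLp_sub, Pi.sub_apply] using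
    norm_sub_norm_le (WithLp.toLp 2 u) (WithLp.toLp 2 v)

theorem sum_sq_ite_sub_ite_le_two {α : Type*} [Fintype α] [DecidableEq α] (a b : α) :
    ∑ j, ((if a = j then 1 else 0) - (if b = j then 1 else 0) : ℝ) ^ 2 ≤ 2 := by
  calc ∑ j, ((if a = j then 1 else 0) - (if b = j then 1 else 0) : ℝ) ^ 2
      ≤ ∑ j, ((if a = j then 1 else 0) + (if b = j then 1 else 0) : ℝ) :=
        sum_le_sum fun j _ => by split_ifs <;> norm_num
    _ = 2 := by simp [sum_add_distrib]; norm_num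

theorem sum_comp_update_sub {ι M : Type*} [Fintype ι] [DecidableEq ι] [AddCommGroup M] {β : Type*}
    (φ : β → M) (x : ι → β) (i : ι) (b : β) :
    ∑ k, φ (x k) - ∑ k, φ (Function.update x i b k) = φ (x i) - φ b := by
  simp only [Function.apply_update (fun _ => φ), sum_update_of_mem (mem_univ i),
    ← add_sum_erase _ _ (mem_univ i), sdiff_singleton_eq_erase]
  abel

theorem sum_abs_le_sqrt_card_mul_sqrt_sum_sq {ι : Type*} [Fintype ι] (u : ι → ℝ) :
    ∑ j, |u j| ≤ √(Fintype.card ι) * √(∑ j, u j ^ 2) := by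
  rw [← sqrt_mul (Nat.cast_nonneg _), ← sqrt_sq (sum_nonneg fun j _ => abs_nonneg (u j))]
  gcongr
  simpa [sq_abs] using sq_sum_le_card_mul_sum_sq (s := univ) (f := fun j => |u j|)

section Empirical
variable {α : Type*} [DecidableEq α] {n : ℕ}

noncomputable def empiricalDistribution (x : Fin n → α) (j : α) : ℝ := #{i | x i = j} / n

theorem empiricalDistribution_eq_sum (x : Fin n → α) (j : α) :
    empiricalDistribution x j = (∑ i, if x i = j then 1 else 0) / n := by
  rw [empiricalDistribution, natCast_card_filter]

theorem empiricalDistribution_sub_update (x : Fin n → α) (i : Fin n) (a j : α) :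
    empiricalDistribution x j - empiricalDistribution (Function.update x i a) j =
      ((if x i = j then 1 else 0) - (if a = j then 1 else 0)) / n := by
  simp only [empiricalDistribution_eq_sum, ← sub_div,
    sum_comp_update_sub (fun b => if b = j then (1 : ℝ) else 0)]

theorem empiricalDistribution_sub_eq (hn : 0 < n) (q : α → ℝ) (x : Fin n → α) (j : α) :
    empiricalDistribution x j - q j = (∑ i, ((if x i = j then 1 else 0) - q j)) / n := by
  rw [empiricalDistribution_eq_sum, sum_sub_distrib, sum_const, card_univ, Fintype.card_fin,
    nsmul_eq_mul]
  field_simp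

variable [Fintype α]

theorem sqrt_sum_sq_empiricalDistribution_sub_update_le (q : α → ℝ) (x : Fin n → α) (i : Fin n)
    (a : α) :
    √(∑ j, (empiricalDistribution x j - q j) ^ 2) -
        √(∑ j, (empiricalDistribution (Function.update x i a) j - q j) ^ 2) ≤ √2 / n := by
  refine (sqrt_sum_sq_sub_sqrt_sum_sq_le _ _).trans ?_
  simp only [sub_sub_sub_cancel_right, empiricalDistribution_sub_update, div_pow, ← sum_div]
  rw [sqrt_div' _ (sq_nonneg _), sqrt_sq (Nat.cast_nonneg n)]
  gcongr
  exact sum_sq_ite_sub_ite_le_two (x i) a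

variable {q : α → ℝ}

theorem sum_prod_mul_sum_sq_empiricalDistribution_sub_le (hq0 : ∀ a, 0 ≤ q a)
    (hq1 : ∑ a, q a = 1) (hn : 0 < n) :
    ∑ x : Fin n → α, (∏ i, q (x i)) * ∑ j, (empiricalDistribution x j - q j) ^ 2 ≤ 1 / n := by
  have hcoord (j : α) :
      ∑ x : Fin n → α, (∏ i, q (x i)) * (empiricalDistribution x j - q j) ^ 2 ≤ q j / n := by
    set h : α → ℝ := fun a => (if a = j then 1 else 0) - q j
    have hmean : ∑ a, q a * h a = 0 := by simp [h, mul_sub, ← sum_mul, hq1]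
    have hvar : ∑ a, q a * h a ^ 2 = q j * (1 - q j) := by
      simp [h, sub_sq, mul_add, mul_sub, sum_add_distrib, ← sum_mul, hq1]
      ring
    calc ∑ x : Fin n → α, (∏ i, q (x i)) * (empiricalDistribution x j - q j) ^ 2
        = (∑ x : Fin n → α, (∏ i, q (x i)) * (∑ i, h (x i)) ^ 2) / n ^ 2 := by
          rw [sum_div]
          simp only [empiricalDistribution_sub_eq hn, div_pow, mul_div_assoc, h]
      _ = q j * (1 - q j) / n := by
          rw [sum_prod_mul_sum_sq hq1 hmean, hvar]
          field_simp
      _ ≤ q j / n := by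
          gcongr
          nlinarith [hq0 j]
  calc ∑ x : Fin n → α, (∏ i, q (x i)) * ∑ j, (empiricalDistribution x j - q j) ^ 2
      = ∑ j, ∑ x : Fin n → α, (∏ i, q (x i)) * (empiricalDistribution x j - q j) ^ 2 := by
        simp only [mul_sum]
        exact sum_comm
    _ ≤ ∑ j, q j / n := sum_le_sum fun j _ => hcoord j
    _ = 1 / n := by rw [← sum_div, hq1]

theorem sum_prod_mul_sqrt_sum_sq_empiricalDistribution_sub_le (hq0 : ∀ a, 0 ≤ q a)
    (hq1 : ∑ a, q a = 1) (hn : 0 < n) :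
    ∑ x : Fin n → α, (∏ i, q (x i)) * √(∑ j, (empiricalDistribution x j - q j) ^ 2) ≤ 1 / √n := by
  calc ∑ x : Fin n → α, (∏ i, q (x i)) * √(∑ j, (empiricalDistribution x j - q j) ^ 2)
      ≤ √(∑ x : Fin n → α, (∏ i, q (x i)) * ∑ j, (empiricalDistribution x j - q j) ^ 2) :=
        strictConcaveOn_sqrt.concaveOn.le_map_sum (fun x _ => prod_nonneg fun i _ => hq0 _)
          (sum_prod_eq_one hq1) fun x _ => Set.mem_Ici.2 (sum_nonneg fun j _ => sq_nonneg _)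
    _ ≤ √(1 / n) := sqrt_le_sqrt (sum_prod_mul_sum_sq_empiricalDistribution_sub_le hq0 hq1 hn)
    _ = 1 / √n := by rw [sqrt_div' _ (Nat.cast_nonneg n), sqrt_one]

end Empirical

theorem measure_setOf_eq_ofReal_sum_prod {Ω α : Type*} [MeasurableSpace Ω] {P : Measure Ω}
    [Fintype α] [MeasurableSpace α] [MeasurableSingletonClass α] {n : ℕ} {X : Fin n → Ω → α}
    (hmeas : ∀ i, Measurable (X i)) (hindep : iIndepFun X P) {q : α → ℝ} (hq0 : ∀ a, 0 ≤ q a)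
    (hlaw : ∀ i a, P {ω | X i ω = a} = ENNReal.ofReal (q a)) (p : (Fin n → α) → Prop)
    [DecidablePred p] :
    P {ω | p fun i => X i ω} = ENNReal.ofReal (∑ x with p x, ∏ i, q (x i)) := by
  have hX : Measurable fun ω i => X i ω := measurable_pi_lambda _ hmeas
  have hpoint (x : Fin n → α) :
      P ((fun ω i => X i ω) ⁻¹' {x}) = ENNReal.ofReal (∏ i, q (x i)) := by
    have hfiber : (fun ω i => X i ω) ⁻¹' {x} = ⋂ i, X i ⁻¹' {x i} := by
      ext ω
      simp [funext_iff]
    rw [hfiber, hindep.meas_iInter fun i => ⟨{x i}, measurableSet_singleton _, rfl⟩,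
      ENNReal.ofReal_prod_of_nonneg fun i _ => hq0 _]
    exact prod_congr rfl fun i _ => hlaw i (x i)
  calc P {ω | p fun i => X i ω} = P.map (fun ω i => X i ω) ↑(univ.filter p) := by
        rw [Measure.map_apply hX (Finset.measurableSet _)]
        congr 1
        ext ω
        simp
    _ = ENNReal.ofReal (∑ x with p x, ∏ i, q (x i)) := by
        rw [← sum_measure_singleton, ENNReal.ofReal_sum_of_nonneg fun x _ =>
          prod_nonneg fun i _ => hq0 _]
        exact sum_congr rfl fun x _ => by
          rw [Measure.map_apply hX (measurableSet_singleton x), hpoint]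

theorem empirical_distribution_concentration_general
    {Ω : Type*} [MeasurableSpace Ω] (P : Measure Ω)
    (d n : ℕ) (hd : 0 < d) (hn : 0 < n)
    (q : Fin d → ℝ) (hq0 : ∀ j, 0 ≤ q j) (hq1 : ∑ j, q j = 1)
    (X : Fin n → Ω → Fin d) (hmeas : ∀ i, Measurable (X i))
    (hindep : ProbabilityTheory.iIndepFun X P)
    (hlaw : ∀ i j, P {ω | X i ω = j} = ENNReal.ofReal (q j))
    (ε : ℝ) (hε : 0 < ε) :
    P {ω | Real.sqrt (∑ j, ((((univ.filter fun i => X i ω = j).card : ℝ) / n - q j) ^ 2))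
          ≥ 1 / Real.sqrt n + ε} ≤ ENNReal.ofReal (Real.exp (-(n * ε ^ 2))) ∧
    P {ω | (∑ j, |((univ.filter fun i => X i ω = j).card : ℝ) / n - q j|)
          ≥ Real.sqrt d * (1 / Real.sqrt n + ε)} ≤ ENNReal.ofReal (Real.exp (-(n * ε ^ 2))) := by
  have hl2 : P {ω | √(∑ j, (empiricalDistribution (fun i => X i ω) j - q j) ^ 2)
      ≥ 1 / √n + ε} ≤ ENNReal.ofReal (exp (-(n * ε ^ 2))) := by
    rw [measure_setOf_eq_ofReal_sum_prod hmeas hindep hq0 hlaw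
      fun x => 1 / √n + ε ≤ √(∑ j, (empiricalDistribution x j - q j) ^ 2)]
    gcongr
    calc _ ≤ exp (-2 * ε ^ 2 / (n * (√2 / n) ^ 2)) :=
          sum_prod_filter_le_exp_of_sub_le hq0 hq1
            (sqrt_sum_sq_empiricalDistribution_sub_update_le q) hε.le
            (by linarith [sum_prod_mul_sqrt_sum_sq_empiricalDistribution_sub_le hq0 hq1 hn])
      _ = exp (-(n * ε ^ 2)) := by
          rw [div_pow, sq_sqrt zero_le_two]
          field_simp
  refine ⟨hl2, (measure_mono fun ω hω => ?_).trans hl2⟩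
  have hsqrt_d : 0 < √(d : ℝ) := sqrt_pos.2 (Nat.cast_pos.2 hd)
  have hl1 := (sum_abs_le_sqrt_card_mul_sqrt_sum_sq
    fun j => empiricalDistribution (fun i => X i ω) j - q j).trans' hω
  rw [Fintype.card_fin] at hl1
  exact le_of_mul_le_mul_left hl1 hsqrt_d

/-- ℓ2/ℓ1 concentration for the empirical distribution of `n` i.i.d. samples from a
distribution `q` on `Fin d` (Proposition A.8 of Agarwal et al.): for every `ε > 0`,
`P(‖q̂ − q‖₂ ≥ 1/√n + ε) ≤ exp(−nε²)`, and consequently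
`P(‖q̂ − q‖₁ ≥ √d (1/√n + ε)) ≤ exp(−nε²)`. -/
theorem empirical_distribution_concentration
    {Ω : Type*} [MeasurableSpace Ω] (P : Measure Ω) [IsProbabilityMeasure P]
    (d n : ℕ) (hd : 0 < d) (hn : 0 < n)
    (q : Fin d → ℝ) (hq0 : ∀ j, 0 ≤ q j) (hq1 : ∑ j, q j = 1)
    (X : Fin n → Ω → Fin d) (hmeas : ∀ i, Measurable (X i))
    (hindep : ProbabilityTheory.iIndepFun X P)
    (hlaw : ∀ i j, P {ω | X i ω = j} = ENNReal.ofReal (q j))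
    (ε : ℝ) (hε : 0 < ε) :
    P {ω | Real.sqrt (∑ j, ((((univ.filter fun i => X i ω = j).card : ℝ) / n - q j) ^ 2))
          ≥ 1 / Real.sqrt n + ε} ≤ ENNReal.ofReal (Real.exp (-(n * ε ^ 2))) ∧
    P {ω | (∑ j, |((univ.filter fun i => X i ω = j).card : ℝ) / n - q j|)
          ≥ Real.sqrt d * (1 / Real.sqrt n + ε)} ≤ ENNReal.ofReal (Real.exp (-(n * ε ^ 2))) :=
  empirical_distribution_concentration_general P d n hd hn q hq0 hq1 X hmeas hindep hlaw ε hε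
end

section
/- There exists a universal constant c > 0 with the following property. Let the state space be 𝒮 = Π_{i<k} C_i, a product of k nonempty finite types all of common cardinality |c|, and let 𝒜 be a nonempty finite action set. Suppose the transition kernel P : 𝒮 × 𝒜 → PMF 𝒮 is locally factored: for each i < k there is a finite parent space X_i, a parent map pa_i : 𝒮 × 𝒜 → X_i, and a conditional distribution P_i : X_i → PMF C_i such that P(s,a) is the product distribution ⊗_{i<k} P_i(pa_i(s,a)). For each i < k and each parent value x ∈ X_i, let the learned mechanism P̂_i(·|x) be the empirical frequency distribution of n i.i.d. samples drawn from P_i(·|x) (all defined on a common probability space), and let P̂(s,a) = ⊗_{i<k} P̂_i(pa_i(s,a)). Then for all ε > 0 and δ ∈ (0,1): if n ≥ c · k² · |c| · log(|𝒮||𝒜|/δ) / ε², then with probability at least 1 − δ, max_{(s,a) ∈ 𝒮×𝒜} ‖P(s,a) − P̂(s,a)‖₁ ≤ ε. -/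
/-!
Write `q̂ᵢ` for the empirical conditionals. By telescoping through the hybrid products that use
`q̂` on the first factors and `P` on the others, the ℓ1 distance between two product
distributions is at most the sum of the ℓ1 distances of their factors; and the ℓ1 distance
between two distributions on `Cᵢ` is twice the largest excess `q̂ᵢ(B) - Pᵢ(B)` over subsets
`B ⊆ Cᵢ`. For a fixed subset that excess is an average of `n` independent centred indicators, so
Hoeffding bounds the probability that it reaches `ε / 2k` by `exp (-n ε² / 2k²)`. A union bound
over the `k |𝒮| |𝒜| 2^|c|` triples `(i, (s, a), B)` finishes the proof with `c = 4`: since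
`|𝒮| = |c|^k`, both `log k` and `|c| log 2` are at most `log (|𝒮| |𝒜| / δ)`. When `|c| = 1`
all mechanisms are deterministic and the learned model is exact.
-/

open MeasureTheory ProbabilityTheory Finset Real

theorem eq_of_sum_eq_of_subsingleton {C M : Type*} [Fintype C] [Subsingleton C]
    [AddCommMonoid M] {p q : C → M} (h : ∑ c, p c = ∑ c, q c) : p = q :=
  funext fun c => by simpa [Fintype.sum_subsingleton _ c] using h

theorem sum_abs_sub_le_two_mul_of_forall_sum_sub_le {C : Type*} [Fintype C] (p q : C → ℝ)
    (hsum : ∑ c, p c = ∑ c, q c) {t : ℝ} (h : ∀ B : Finset C, ∑ c ∈ B, (q c - p c) ≤ t) :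
    ∑ c, |p c - q c| ≤ 2 * t := by
  classical
  have habs : ∀ c, |p c - q c| = 2 * (if p c ≤ q c then q c - p c else 0) - (q c - p c) := by
    intro c
    split_ifs with hc
    · rw [abs_of_nonpos (by linarith)]; ring
    · rw [abs_of_pos (by linarith)]; ring
  calc ∑ c, |p c - q c|
      = ∑ c, 2 * (if p c ≤ q c then q c - p c else 0) - ∑ c, (q c - p c) := by
        rw [← sum_sub_distrib]; exact sum_congr rfl fun c _ => habs c
    _ = 2 * ∑ c with p c ≤ q c, (q c - p c) := by
        rw [sum_sub_distrib q, hsum, sub_self, sub_zero, ← mul_sum, sum_filter]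
    _ ≤ 2 * t := by gcongr; exact h _

section Telescoping

variable {ι : Type*} [Fintype ι] [LinearOrder ι]

theorem Finset.prod_sub_prod_eq_sum_prod_ite {R : Type*} [CommRing R] (a b : ι → R) :
    ∏ i, a i - ∏ i, b i =
      ∑ i, ∏ j, if j < i then b j else if i < j then a j else a j - b j := by
  have key := prod_sub_ordered univ a (fun i => a i - b i)
  simp only [sub_sub_cancel] at key
  rw [key, sub_sub_cancel]
  refine sum_congr rfl fun i _ => ?_
  rw [prod_ite, prod_ite]
  simp only [filter_filter]
  have hgt : univ.filter (fun j => ¬j < i ∧ i < j) = univ.filter (i < ·) := by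
    ext j; simpa using fun h => h.le
  have heq : univ.filter (fun j => ¬j < i ∧ ¬i < j) = {i} := by
    ext j; simp [le_antisymm_iff, and_comm]
  rw [hgt, heq, prod_singleton]
  ring

theorem sum_abs_prod_sub_prod_le {C : ι → Type*} [∀ i, Fintype (C i)] (p q : ∀ i, C i → ℝ)
    (hp0 : ∀ i c, 0 ≤ p i c) (hq0 : ∀ i c, 0 ≤ q i c)
    (hp1 : ∀ i, ∑ c, p i c = 1) (hq1 : ∀ i, ∑ c, q i c = 1) :
    ∑ x : ∀ i, C i, |∏ i, p i (x i) - ∏ i, q i (x i)| ≤ ∑ i, ∑ c, |p i c - q i c| := by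
  let H (i j : ι) (c : C j) : ℝ := if j < i then q j c else if i < j then p j c else p j c - q j c
  have hH : ∀ i j, j ≠ i → ∑ c, |H i j c| = 1 := by
    intro i j hji
    rcases hji.lt_or_gt with hj | hj
    · simp [H, hj, abs_of_nonneg (hq0 _ _), hq1]
    · simp [H, hj, hj.not_gt, abs_of_nonneg (hp0 _ _), hp1]
  calc ∑ x : ∀ i, C i, |∏ i, p i (x i) - ∏ i, q i (x i)|
      = ∑ x : ∀ i, C i, |∑ i, ∏ j, H i j (x j)| := by
        simp only [prod_sub_prod_eq_sum_prod_ite, H]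
    _ ≤ ∑ x : ∀ i, C i, ∑ i, ∏ j, |H i j (x j)| := by
        gcongr with x
        simpa only [abs_prod] using abs_sum_le_sum_abs (fun i => ∏ j, H i j (x j)) univ
    _ = ∑ i, ∏ j, ∑ c, |H i j c| := by
        rw [sum_comm]
        simp only [Fintype.prod_sum]
    _ = ∑ i, ∑ c, |p i c - q i c| := by
        refine sum_congr rfl fun i _ => ?_
        rw [prod_eq_single i (fun j _ hji => hH i j hji) (by simp)]
        simp [H]

theorem sum_abs_prod_sub_prod_le_of_forall_sum_sub_le {C : ι → Type*} [∀ i, Fintype (C i)]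
    (p q : ∀ i, C i → ℝ)
    (hp0 : ∀ i c, 0 ≤ p i c) (hq0 : ∀ i c, 0 ≤ q i c)
    (hp1 : ∀ i, ∑ c, p i c = 1) (hq1 : ∀ i, ∑ c, q i c = 1) {t : ℝ}
    (h : ∀ i (B : Finset (C i)), ∑ c ∈ B, (q i c - p i c) ≤ t) :
    ∑ x : ∀ i, C i, |∏ i, p i (x i) - ∏ i, q i (x i)| ≤ Fintype.card ι * (2 * t) := by
  calc ∑ x : ∀ i, C i, |∏ i, p i (x i) - ∏ i, q i (x i)|
      ≤ ∑ i, ∑ c, |p i c - q i c| := sum_abs_prod_sub_prod_le p q hp0 hq0 hp1 hq1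
    _ ≤ ∑ _i : ι, 2 * t := sum_le_sum fun i _ =>
        sum_abs_sub_le_two_mul_of_forall_sum_sub_le _ _ ((hp1 i).trans (hq1 i).symm) (h i)
    _ = Fintype.card ι * (2 * t) := by simp

end Telescoping

section EmpiricalFrequency

variable {C : Type*} [DecidableEq C] {n : ℕ}

noncomputable def empiricalFreq (x : Fin n → C) (c : C) : ℝ :=
  #{m | x m = c} / n

theorem empiricalFreq_nonneg (x : Fin n → C) (c : C) : 0 ≤ empiricalFreq x c := by
  unfold empiricalFreq; positivity

theorem natCast_mul_empiricalFreq (x : Fin n → C) (c : C) :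
    n * empiricalFreq x c = #{m | x m = c} := by
  rcases n.eq_zero_or_pos with rfl | hn
  · simp
  · unfold empiricalFreq
    field_simp

theorem sum_natCast_mul_empiricalFreq (x : Fin n → C) (B : Finset C) :
    ∑ c ∈ B, n * empiricalFreq x c = ∑ m, if x m ∈ B then 1 else 0 := by
  simp only [natCast_mul_empiricalFreq, natCast_card_filter]
  rw [sum_comm]
  simp [sum_ite_eq]

theorem sum_empiricalFreq [Fintype C] (hn : 0 < n) (x : Fin n → C) :
    ∑ c, empiricalFreq x c = 1 := by
  have h := sum_natCast_mul_empiricalFreq x univ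
  simp only [← mul_sum, mem_univ, if_true, sum_const, card_univ, Fintype.card_fin,
    nsmul_eq_mul, mul_one] at h
  exact (mul_eq_left₀ (by positivity)).1 h

end EmpiricalFrequency

section Concentration

variable {Ω : Type*} [MeasurableSpace Ω] {P : Measure Ω}

theorem integral_ite_mem_eq_sum {C : Type*} [DecidableEq C] [IsFiniteMeasure P] {ξ : Ω → C}
    (hξ : @Measurable Ω C _ ⊤ ξ) {p : C → ℝ}
    (hp0 : ∀ c, 0 ≤ p c) (hdist : ∀ c, P {ω | ξ ω = c} = ENNReal.ofReal (p c)) (B : Finset C) :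
    ∫ ω, (if ξ ω ∈ B then 1 else 0 : ℝ) ∂P = ∑ c ∈ B, p c := by
  have hind : (fun ω => if ξ ω ∈ B then (1 : ℝ) else 0) = (ξ ⁻¹' B).indicator 1 := by
    ext ω; simp [Set.indicator]
  rw [hind, integral_indicator_one (hξ MeasurableSpace.measurableSet_top), measureReal_def,
    ← sum_measure_preimage_singleton B fun _ _ => hξ MeasurableSpace.measurableSet_top,
    ENNReal.toReal_sum fun _ _ => measure_ne_top _ _]
  exact sum_congr rfl fun c _ =>
    (congrArg ENNReal.toReal (hdist c)).trans (ENNReal.toReal_ofReal (hp0 c))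

variable [IsProbabilityMeasure P]

theorem ofReal_one_sub_le_measure_of_forall_notMem {ι : Type*} [Fintype ι] {Q : Ω → Prop}
    {bad : ι → Set Ω} (hQ : ∀ ω, (∀ j, ω ∉ bad j) → Q ω) {r δ : ℝ} (hδ : 0 ≤ δ)
    (hbad : ∀ j, P (bad j) ≤ ENNReal.ofReal r) (hr : Fintype.card ι * r ≤ δ) :
    ENNReal.ofReal (1 - δ) ≤ P {ω | Q ω} := by
  have hunion : P (⋃ j, bad j) ≤ ENNReal.ofReal δ :=
    calc P (⋃ j, bad j) ≤ ∑ j, P (bad j) := measure_iUnion_fintype_le P bad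
      _ ≤ ∑ _j : ι, ENNReal.ofReal r := sum_le_sum fun j _ => hbad j
      _ = ENNReal.ofReal (Fintype.card ι * r) := by
        rw [sum_const, card_univ, nsmul_eq_mul, ENNReal.ofReal_mul (by positivity),
          ENNReal.ofReal_natCast]
      _ ≤ ENNReal.ofReal δ := ENNReal.ofReal_le_ofReal hr
  have hcover : 1 ≤ P (⋃ j, bad j) + P {ω | Q ω} := by
    rw [← measure_univ (μ := P)]
    refine (measure_mono fun ω _ => ?_).trans (measure_union_le _ _)
    by_cases h : ∃ j, ω ∈ bad j
    · exact Or.inl (Set.mem_iUnion.2 h)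
    · exact Or.inr (hQ ω (not_exists.1 h))
  calc ENNReal.ofReal (1 - δ) ≤ 1 - ENNReal.ofReal δ := by
        rw [← ENNReal.ofReal_one, ← ENNReal.ofReal_sub _ hδ]
    _ ≤ 1 - P (⋃ j, bad j) := tsub_le_tsub_left hunion 1
    _ ≤ P {ω | Q ω} := tsub_le_iff_left.2 hcover

open scoped NNReal in
theorem measure_le_sum_empiricalFreq_sub_le_exp {C : Type*} [DecidableEq C] {n : ℕ}
    {ξ : Fin n → Ω → C}
    (hmeas : ∀ m, @Measurable Ω C _ ⊤ (ξ m))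
    (hindep : iIndepFun (m := fun _ => (⊤ : MeasurableSpace C)) ξ P) {p : C → ℝ}
    (hp0 : ∀ c, 0 ≤ p c) (hdist : ∀ m c, P {ω | ξ m ω = c} = ENNReal.ofReal (p c))
    (B : Finset C) {t : ℝ} (ht : 0 ≤ t) :
    P {ω | t ≤ ∑ c ∈ B, (empiricalFreq (ξ · ω) c - p c)} ≤
      ENNReal.ofReal (exp (-2 * n * t ^ 2)) := by
  let f : C → ℝ := fun c => if c ∈ B then 1 else 0
  have hmean : ∀ m, ∫ ω, f (ξ m ω) ∂P = ∑ c ∈ B, p c := fun m =>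
    integral_ite_mem_eq_sum (hmeas m) hp0 (hdist m) B
  let Y (m : Fin n) (ω : Ω) : ℝ := f (ξ m ω) - ∫ ω, f (ξ m ω) ∂P
  have hY : iIndepFun Y P :=
    hindep.comp (fun m (c : C) => f c - ∫ ω, f (ξ m ω) ∂P) fun _ => measurable_from_top
  have hsubG : ∀ m, HasSubgaussianMGF (Y m) ((‖(1 : ℝ) - 0‖₊ / 2) ^ 2) P := fun m =>
    hasSubgaussianMGF_of_mem_Icc ((measurable_from_top (f := f)).comp (hmeas m)).aemeasurable
      (ae_of_all _ fun ω => by by_cases h : ξ m ω ∈ B <;> simp [f, h])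
  have hsum : ∀ ω, ∑ m, Y m ω = n * ∑ c ∈ B, (empiricalFreq (ξ · ω) c - p c) := by
    intro ω
    simp only [Y, hmean, mul_sum, mul_sub, sum_sub_distrib, sum_natCast_mul_empiricalFreq, f]
    simp [mul_sum]
  have hsub : {ω | t ≤ ∑ c ∈ B, (empiricalFreq (ξ · ω) c - p c)} ⊆ {ω | n * t ≤ ∑ m, Y m ω} :=
    fun ω hω => by
      rw [Set.mem_ofPred_eq, hsum]
      exact mul_le_mul_of_nonneg_left hω n.cast_nonneg
  have hexp : -(n * t) ^ 2 / (2 * ∑ _m : Fin n, ((‖(1 : ℝ) - 0‖₊ / 2) ^ 2 : ℝ≥0)) =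
      -2 * n * t ^ 2 := by
    rcases eq_or_ne (n : ℝ) 0 with hn | hn
    · simp [hn]
    · norm_num
      field_simp
      ring
  rw [← hexp, ENNReal.le_ofReal_iff_toReal_le (measure_ne_top _ _) (exp_nonneg _)]
  exact (measureReal_mono hsub).trans
    (HasSubgaussianMGF.measure_sum_ge_le_of_iIndepFun hY (fun m _ => hsubG m) (by positivity))

end Concentration

theorem mul_exp_le_of_four_mul_log_div_le {k cc a n : ℕ} (hk : 0 < k) (hcc : 2 ≤ cc) (ha : 0 < a)
    {ε δ : ℝ} (hε : 0 < ε) (hδ0 : 0 < δ) (hδ1 : δ < 1)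
    (hn : 4 * k ^ 2 * cc * log ((cc ^ k * a : ℕ) / δ) / ε ^ 2 ≤ n) :
    (k * (cc ^ k * a * 2 ^ cc) : ℝ) * exp (-2 * n * (ε / (2 * k)) ^ 2) ≤ δ := by
  set M : ℝ := (cc ^ k * a : ℕ) / δ with hM
  have hccM : (cc : ℝ) ≤ M := by
    calc (cc : ℝ) ≤ (cc ^ k * a : ℕ) := by
          exact_mod_cast (Nat.le_self_pow hk.ne' cc).trans (Nat.le_mul_of_pos_right _ ha)
      _ ≤ M := le_div_self (by positivity) hδ0 hδ1.le
  have hkM : (k : ℝ) ≤ M := by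
    calc (k : ℝ) ≤ (cc ^ k * a : ℕ) := by
          exact_mod_cast (Nat.lt_two_pow_self.le.trans (Nat.pow_le_pow_left hcc k)).trans
            (Nat.le_mul_of_pos_right _ ha)
      _ ≤ M := le_div_self (by positivity) hδ0 hδ1.le
  have h2M : (2 : ℝ) ≤ M := le_trans (by exact_mod_cast hcc) hccM
  have hMpos : 0 < M := by linarith
  have hcount : (k * (cc ^ k * a * 2 ^ cc) : ℝ) ≤ δ * M ^ (2 * cc) := by
    calc (k * (cc ^ k * a * 2 ^ cc) : ℝ) = δ * (k * 2 ^ cc * M) := by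
          rw [hM]; push_cast; field_simp
      _ ≤ δ * (M * M ^ cc * M) := by gcongr
      _ = δ * M ^ (cc + 2) := by ring
      _ ≤ δ * M ^ (2 * cc) := by gcongr; exacts [by linarith, by omega]
  have hexponent : -2 * n * (ε / (2 * k)) ^ 2 ≤ -(2 * cc * log M) := by
    have hk' : (0 : ℝ) < k := by exact_mod_cast hk
    rw [div_le_iff₀ (by positivity)] at hn
    rw [div_pow, mul_pow]
    field_simp
    nlinarith
  calc (k * (cc ^ k * a * 2 ^ cc) : ℝ) * exp (-2 * n * (ε / (2 * k)) ^ 2)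
      ≤ δ * M ^ (2 * cc) * exp (-(2 * cc * log M)) := by gcongr
    _ = δ := by
      rw [exp_neg, show 2 * (cc : ℝ) * log M = (2 * cc : ℕ) * log M by push_cast; ring,
        exp_nat_mul, exp_log hMpos]
      field_simp

/-- MoCoDA Theorem 1: sample complexity of learning a locally factored dynamics
model.  There is a universal constant `c > 0` such that if each local causal
mechanism `P_i(· | x)` is estimated by the empirical frequency distribution of
`n ≥ c k² |c_i| log(|S||A|/δ) / ε²` i.i.d. samples (for every mechanism `i` and
parent configuration `x`), then with probability at least `1 − δ` the ℓ1 error of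
the learned factored model is at most `ε` uniformly over all state-action pairs. -/
theorem locally_factored_model_sample_complexity :
    ∃ c : ℝ, 0 < c ∧
      ∀ (k : ℕ), 0 < k →
      ∀ (C : Fin k → Type) [∀ i, Fintype (C i)] [∀ i, Nonempty (C i)]
        [∀ i, DecidableEq (C i)]
        (cc : ℕ), (∀ i, Fintype.card (C i) = cc) →
      ∀ (A : Type) [Fintype A] [Nonempty A]
        (Xp : Fin k → Type) [∀ i, Fintype (Xp i)]
        (pa : ∀ i, ((∀ j, C j) × A) → Xp i)
        (Pc : ∀ i, Xp i → C i → ℝ),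
        (∀ i x ci, 0 ≤ Pc i x ci) → (∀ i x, ∑ ci, Pc i x ci = 1) →
      ∀ (Ω : Type) [MeasurableSpace Ω] (P : Measure Ω) [IsProbabilityMeasure P]
        (n : ℕ), 0 < n →
      ∀ (ξ : ∀ i, Xp i → Fin n → Ω → C i),
        (∀ i x m, @Measurable Ω (C i) _ ⊤ (ξ i x m)) →
        (∀ i x, ProbabilityTheory.iIndepFun (m := fun _ => (⊤ : MeasurableSpace (C i))) (ξ i x) P) →
        (∀ i x m ci, P {ω | ξ i x m ω = ci} = ENNReal.ofReal (Pc i x ci)) →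
      ∀ (ε δ : ℝ), 0 < ε → 0 < δ → δ < 1 →
        c * k ^ 2 * cc *
            Real.log ((Fintype.card (∀ j, C j) * Fintype.card A : ℕ) / δ) / ε ^ 2 ≤ n →
        ENNReal.ofReal (1 - δ) ≤
          P {ω | ∀ sa : (∀ j, C j) × A,
              ∑ t : ∀ j, C j,
                |(∏ i, Pc i (pa i sa) (t i)) -
                  ∏ i, (((univ.filter fun m => ξ i (pa i sa) m ω = t i).card : ℝ) / n)|
              ≤ ε} := by
  refine ⟨4, by norm_num, ?_⟩
  intro k hk C _ _ _ cc hcard A _ _ Xp _ pa Pc hPc0 hPc1 Ω _ P _ n hn ξ hξmeas hξindep hξdist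
    ε δ hε hδ0 hδ1 hsamp
  have hl1 : ∀ ω sa {t : ℝ}, (∀ i (B : Finset (C i)),
      ∑ c ∈ B, (empiricalFreq (ξ i (pa i sa) · ω) c - Pc i (pa i sa) c) ≤ t) →
      ∑ x : ∀ j, C j, |∏ i, Pc i (pa i sa) (x i) - ∏ i, empiricalFreq (ξ i (pa i sa) · ω) (x i)|
        ≤ k * (2 * t) := fun ω sa t h => by
    simpa using sum_abs_prod_sub_prod_le_of_forall_sum_sub_le _ _ (fun i => hPc0 i _)
      (fun i => empiricalFreq_nonneg _) (fun i => hPc1 i _) (fun i => sum_empiricalFreq hn _) h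
  obtain hcc | hcc : cc = 1 ∨ 2 ≤ cc := by
    have := hcard ⟨0, hk⟩ ▸ Fintype.card_pos (α := C ⟨0, hk⟩)
    omega
  · have : ∀ i, Subsingleton (C i) := fun i =>
      Fintype.card_le_one_iff_subsingleton.1 (hcard i ▸ hcc.le)
    refine (show ENNReal.ofReal (1 - δ) ≤ P Set.univ by simpa using hδ0.le).trans
      (measure_mono fun ω _ sa => (hl1 ω sa (t := 0) fun i B => ?_).trans (by simpa using hε.le))
    rw [eq_of_sum_eq_of_subsingleton ((hPc1 i (pa i sa)).trans
      (sum_empiricalFreq hn (ξ i (pa i sa) · ω)).symm)]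
    simp
  -- Indexed by `(s, a)` rather than by parent values, whose number is not controlled.
  let bad (j : Σ i : Fin k, ((∀ j, C j) × A) × Finset (C i)) : Set Ω :=
    {ω | ε / (2 * k) ≤ ∑ c ∈ j.2.2,
      (empiricalFreq (ξ j.1 (pa j.1 j.2.1) · ω) c - Pc j.1 (pa j.1 j.2.1) c)}
  refine ofReal_one_sub_le_measure_of_forall_notMem (bad := bad) (fun ω hω sa => ?_) hδ0.le
    (fun j => measure_le_sum_empiricalFreq_sub_le_exp (hξmeas _ _) (hξindep _ _) (hPc0 _ _)
      (hξdist _ _) _ (by positivity)) ?_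
  · refine (hl1 ω sa fun i B => (not_le.1 (hω ⟨i, sa, B⟩)).le).trans_eq ?_
    field_simp
  · have hS : Fintype.card (∀ j, C j) = cc ^ k := by simp [Fintype.card_pi, hcard]
    rw [hS] at hsamp
    simpa [Fintype.card_sigma, Fintype.card_finset, hcard, hS, mul_assoc] using
      mul_exp_le_of_four_mul_log_div_le hk hcc Fintype.card_pos hε hδ0 hδ1 hsamp
end
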